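/- arXiv:2304.00945 — 5 statements merged into one kernel-verified Lean document; each statement's English description precedes it below -/
import Mathlib

section
/- Let G be a 3-connected graph. Every trivial tri-separation of G is nested with every strong tri-separation of G. (A tri-separation (A,B) is trivial if A and B are the sides of a 3-edge-cut one of whose sides has size one; it is strong if every vertex in its separator has degree at least four. Two mixed-separations (A,B) and (C,D) are nested if, after possibly swapping A with B or C with D, we have A ⊆ C and B ⊇ D.) -/
namespace Paper

open SimpleGraph

variable {V : Type*} [Fintype V] [DecidableEq V]

/-- A graph is `k`-connected if it has more than `k` vertices and deleting
fewer than `k` vertices never disconnects it. -/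
def KConnected {W : Type*} (k : ℕ) (H : SimpleGraph W) : Prop :=
  k < Nat.card W ∧ ∀ S : Set W, S.ncard < k → (H.induce Sᶜ).Connected

/-- A mixed-separation of `G`: `A ∪ B = V(G)` and both `A \ B` and `B \ A` are nonempty. -/
def MixedSep (G : SimpleGraph V) (A B : Set V) : Prop :=
  A ∪ B = Set.univ ∧ (A \ B).Nonempty ∧ (B \ A).Nonempty

/-- The edges of the separator of `(A,B)`: the edges between `A \ B` and `B \ A`. -/
def sepEdges (G : SimpleGraph V) (A B : Set V) : Set (Sym2 V) :=
  {e | e ∈ G.edgeSet ∧ ∃ x ∈ A \ B, ∃ y ∈ B \ A, e = s(x, y)}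

/-- The separator of `(A,B)`: the vertices of `A ∩ B` together with the
edges between `A \ B` and `B \ A`, viewed as a set in `V ⊕ Sym2 V`. -/
def sepSet (G : SimpleGraph V) (A B : Set V) : Set (V ⊕ Sym2 V) :=
  (Sum.inl '' (A ∩ B)) ∪ (Sum.inr '' sepEdges G A B)

/-- The order of a mixed-separation: the size of its separator. -/
noncomputable def sepOrder (G : SimpleGraph V) (A B : Set V) : ℕ :=
  (sepSet G A B).ncard

/-- A mixed `k`-separation. -/
def MixedKSep (G : SimpleGraph V) (k : ℕ) (A B : Set V) : Prop :=
  MixedSep G A B ∧ sepOrder G A B = k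

/-- A tri-separation: a mixed 3-separation such that every vertex of `A ∩ B`
has at least two neighbours in both `G[A]` and `G[B]`. -/
def TriSep (G : SimpleGraph V) (A B : Set V) : Prop :=
  MixedKSep G 3 A B ∧
    ∀ v ∈ A ∩ B, 2 ≤ (G.neighborSet v ∩ A).ncard ∧ 2 ≤ (G.neighborSet v ∩ B).ncard

/-- Two mixed-separations are nested if, after possibly swapping the names of
the sides of either one, `A ⊆ C` and `B ⊇ D`. -/
def Nested (A B C D : Set V) : Prop :=
  (A ⊆ C ∧ D ⊆ B) ∨ (A ⊆ D ∧ C ⊆ B) ∨ (B ⊆ C ∧ D ⊆ A) ∨ (B ⊆ D ∧ C ⊆ A)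

/-- The induced subgraph `G[A]` contains a cycle. -/
def HasCycleIn (G : SimpleGraph V) (A : Set V) : Prop :=
  ∃ (u : V) (p : G.Walk u u), p.IsCycle ∧ ∀ x ∈ p.support, x ∈ A

/-- A mixed 3-separation is nontrivial if both sides induce a subgraph containing a cycle. -/
def NontrivialSep (G : SimpleGraph V) (A B : Set V) : Prop :=
  HasCycleIn G A ∧ HasCycleIn G B

/-- A mixed-separation is strong if every vertex in its separator has degree at least 4. -/
def StrongSep (G : SimpleGraph V) (A B : Set V) : Prop :=
  ∀ v ∈ A ∩ B, 4 ≤ (G.neighborSet v).ncard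

/-- A tri-separation is totally nested if it is nested with every tri-separation of `G`. -/
def TotallyNested (G : SimpleGraph V) (A B : Set V) : Prop :=
  ∀ C D : Set V, TriSep G C D → Nested A B C D

/-- A trivial tri-separation: its sides are the sides `{v}` and `V \ {v}` of an
atomic cut at a degree-3 vertex `v`. -/
def TrivialSep (G : SimpleGraph V) (A B : Set V) : Prop :=
  ∃ v : V, (G.neighborSet v).ncard = 3 ∧
    ((A = {v} ∧ B = {v}ᶜ) ∨ (B = {v} ∧ A = {v}ᶜ))

/-- Diagonal edges of the crossing-diagram of `(A,B)` and `(C,D)`: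
edges whose endvertices lie in opposite corners. -/
def diagEdges (G : SimpleGraph V) (A B C D : Set V) : Set (Sym2 V) :=
  {e | e ∈ G.edgeSet ∧ ∃ x y, e = s(x, y) ∧
    ((x ∈ (A \ B) ∩ (C \ D) ∧ y ∈ (B \ A) ∩ (D \ C)) ∨
     (x ∈ (A \ B) ∩ (D \ C) ∧ y ∈ (B \ A) ∩ (C \ D)))}

/-- The centre of the crossing-diagram: `A ∩ B ∩ C ∩ D` together with the diagonal edges. -/
def centre (G : SimpleGraph V) (A B C D : Set V) : Set (V ⊕ Sym2 V) :=
  (Sum.inl '' (A ∩ B ∩ C ∩ D)) ∪ (Sum.inr '' diagEdges G A B C D)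

/-- The link for the side `C` in the crossing-diagram of `(A,B)` and `(C,D)`:
the vertices `(A ∩ B) \ D` together with the non-diagonal edges of the separator
of `(A,B)` having an endvertex in a corner for `C`. -/
def link (G : SimpleGraph V) (A B C D : Set V) : Set (V ⊕ Sym2 V) :=
  (Sum.inl '' ((A ∩ B) \ D)) ∪
    (Sum.inr '' {e | e ∈ sepEdges G A B ∧ e ∉ diagEdges G A B C D ∧ ∃ x ∈ e, x ∈ C \ D})

/-- The corner-separator at the corner for `{A,C}`: the union of the links for `A`
and for `C` together with the centre, minus the diagonal edges without an
endvertex in the corner for `{A,C}`. -/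
def cornerSep (G : SimpleGraph V) (A B C D : Set V) : Set (V ⊕ Sym2 V) :=
  link G C D A B ∪ link G A B C D ∪ (Sum.inl '' (A ∩ B ∩ C ∩ D)) ∪
    (Sum.inr '' {e | e ∈ diagEdges G A B C D ∧ ∃ x ∈ e, x ∈ (A \ B) ∩ (C \ D)})

/-- Jumping edges: edges joining vertices of two opposite links. -/
def jumpEdges (G : SimpleGraph V) (A B C D : Set V) : Set (Sym2 V) :=
  {e | e ∈ G.edgeSet ∧ ∃ x y, e = s(x, y) ∧
    ((x ∈ (A ∩ B) \ D ∧ y ∈ (A ∩ B) \ C) ∨ (x ∈ (C ∩ D) \ B ∧ y ∈ (C ∩ D) \ A))}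

/-- A 2-separation: a separation of order two with no edges in its separator. -/
def TwoSep (G : SimpleGraph V) (A B : Set V) : Prop :=
  A ∪ B = Set.univ ∧ (A \ B).Nonempty ∧ (B \ A).Nonempty ∧
    (A ∩ B).ncard = 2 ∧ sepEdges G A B = ∅

/-- `K` is (the vertex set of) a connected component of `G - S`. -/
def IsCompOf (G : SimpleGraph V) (S K : Set V) : Prop :=
  ∃ c : (G.induce Sᶜ).ConnectedComponent, K = Subtype.val '' c.supp

omit [Fintype V] [DecidableEq V] in
theorem Nested.swap_left {A B C D : Set V} (h : Nested A B C D) : Nested B A C D := by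
  unfold Nested at *
  tauto

omit [Fintype V] [DecidableEq V] in
theorem nested_singleton_compl {v : V} {C D : Set V} (hCD : C ∪ D = Set.univ)
    (hv : v ∉ C ∩ D) : Nested {v} {v}ᶜ C D := by
  rcases hCD ▸ Set.mem_univ v with hC | hD
  · exact Or.inl ⟨Set.singleton_subset_iff.2 hC, fun x hx (hxv : x = v) => hv ⟨hC, hxv ▸ hx⟩⟩
  · exact Or.inr <| Or.inl
      ⟨Set.singleton_subset_iff.2 hD, fun x hx (hxv : x = v) => hv ⟨hxv ▸ hx, hD⟩⟩

omit [Fintype V] [DecidableEq V] in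
theorem StrongSep.notMem_inter {G : SimpleGraph V} {C D : Set V} (h : StrongSep G C D)
    {v : V} (hv : (G.neighborSet v).ncard < 4) : v ∉ C ∩ D :=
  fun hCD => (h v hCD).not_gt hv

theorem stmt1_general (G : SimpleGraph V) (A B C D : Set V)
    (htriv : TrivialSep G A B)
    (hCD : TriSep G C D) (hstrong : StrongSep G C D) :
    Nested A B C D := by
  obtain ⟨v, hdeg, hsides⟩ := htriv
  have hnested := nested_singleton_compl hCD.1.1.1 (hstrong.notMem_inter (v := v) (by omega))
  rcases hsides with ⟨rfl, rfl⟩ | ⟨rfl, rfl⟩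
  · exact hnested
  · exact hnested.swap_left

/-- Trivial tri-separations of a 3-connected graph are nested
with all strong tri-separations. -/
theorem stmt1 (G : SimpleGraph V) (h3 : KConnected 3 G) (A B C D : Set V)
    (hAB : TriSep G A B) (htriv : TrivialSep G A B)
    (hCD : TriSep G C D) (hstrong : StrongSep G C D) :
    Nested A B C D :=
  stmt1_general G A B C D htriv hCD hstrong

end Paper
end

section
/- Let G be a 3-connected graph and let (A,B) be a mixed 3-separation of G such that both G[A] and G[B] contain a cycle (i.e. (A,B) is nontrivial). Then the edges in the separator of (A,B) form a matching between A\B and B\A: no two of them share an endvertex. -/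
/-!
Suppose two separator edges share an endvertex `x`. The separator has only three elements, so `x`
together with one vertex of the remaining element meets every element of the separator. These at
most two vertices miss a vertex of the cycle in `G[A]` and one of the cycle in `G[B]`, and any path
between those two would have to pass through the separator, contradicting 3-connectivity.
-/

namespace Paper

open SimpleGraph

variable {V : Type*} [Fintype V] [DecidableEq V]

section

omit [Fintype V] [DecidableEq V]

def Meets (s : V) : V ⊕ Sym2 V → Prop :=
  Sum.elim (· = s) (s ∈ ·)

theorem HasCycleIn.three_le_ncard {G : SimpleGraph V} {A : Set V} (h : HasCycleIn G A)
    (hA : A.Finite) : 3 ≤ A.ncard := by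
  classical
  obtain ⟨u, p, hp, hpA⟩ := h
  have hsub : {x | x ∈ p.support.tail} ⊆ A := fun x hx => hpA x (List.mem_of_mem_tail hx)
  calc 3 ≤ p.length := hp.three_le_length
    _ = p.support.tail.toFinset.card := by
      rw [List.toFinset_card_of_nodup hp.support_nodup, List.length_tail, p.length_support]
      rfl
    _ = ({x | x ∈ p.support.tail} : Set V).ncard := by
      rw [← Set.ncard_coe_finset, List.coe_toFinset]
    _ ≤ A.ncard := Set.ncard_le_ncard hsub hA

theorem exists_ncard_lt_of_meets_two_edges {T : Set (V ⊕ Sym2 V)} (hT : T.Finite)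
    {e f : Sym2 V} (he : Sum.inr e ∈ T) (hf : Sum.inr f ∈ T) (hef : e ≠ f)
    {x : V} (hxe : x ∈ e) (hxf : x ∈ f) :
    ∃ S : Set V, S.ncard < T.ncard ∧ ∀ t ∈ T, ∃ s ∈ S, Meets s t := by
  have hmeets : ∀ t : V ⊕ Sym2 V, ∃ s, Meets s t := by
    rintro (v | g)
    · exact ⟨v, rfl⟩
    · induction g using Sym2.ind with
      | h a b => exact ⟨a, Sym2.mem_mk_left a b⟩
  choose pt hpt using hmeets
  let E : Set (V ⊕ Sym2 V) := {Sum.inr e, Sum.inr f}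
  have hET : E ⊆ T := Set.insert_subset he (Set.singleton_subset_iff.mpr hf)
  have hE : E.ncard = 2 := Set.ncard_pair (by simpa using hef)
  have hT2 : 2 ≤ T.ncard := hE ▸ Set.ncard_le_ncard hET hT
  refine ⟨insert x (pt '' (T \ E)), ?_, ?_⟩
  · calc (insert x (pt '' (T \ E))).ncard ≤ (pt '' (T \ E)).ncard + 1 := Set.ncard_insert_le _ _
      _ ≤ (T \ E).ncard + 1 := by gcongr; exact Set.ncard_image_le hT.sdiff
      _ < T.ncard := by rw [Set.ncard_sdiff hET, hE]; omega
  · intro t ht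
    by_cases htE : t ∈ E
    · refine ⟨x, Set.mem_insert _ _, ?_⟩
      rcases htE with rfl | rfl
      exacts [hxe, hxf]
    · exact ⟨pt t, Set.mem_insert_of_mem _ ⟨t, ⟨ht, htE⟩, rfl⟩, hpt t⟩

theorem not_preconnected_of_meets_sepSet {G : SimpleGraph V} {A B S : Set V}
    (hAB : A ∪ B = Set.univ) (hS : ∀ t ∈ sepSet G A B, ∃ s ∈ S, Meets s t)
    {a b : V} (ha : a ∈ A) (haS : a ∉ S) (hb : b ∈ B) (hbS : b ∉ S) :
    ¬ (G.induce Sᶜ).Preconnected := by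
  have hinter : A ∩ B ⊆ S := fun v hv => by
    obtain ⟨s, hs, rfl⟩ := hS (Sum.inl v) (Or.inl ⟨v, hv, rfl⟩)
    exact hs
  intro hconn
  obtain ⟨p⟩ := hconn ⟨a, haS⟩ ⟨b, hbS⟩
  obtain ⟨d, -, hu, hv⟩ := p.exists_boundary_dart {z | (z : V) ∉ B}
    (fun haB => haS (hinter ⟨ha, haB⟩)) (by simpa using hb)
  have huA : (d.fst : V) ∈ A \ B := ⟨(hAB ▸ Set.mem_univ _ : _ ∈ A ∪ B).resolve_right hu, hu⟩
  have hvB : (d.snd : V) ∈ B \ A := by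
    have hvB : (d.snd : V) ∈ B := by simpa using hv
    exact ⟨hvB, fun hvA => d.snd.2 (hinter ⟨hvA, hvB⟩)⟩
  obtain ⟨s, hs, hsd⟩ :=
    hS (Sum.inr s(d.fst, d.snd)) (Or.inr ⟨_, ⟨d.adj, _, huA, _, hvB, rfl⟩, rfl⟩)
  rcases Sym2.mem_iff.mp hsd with rfl | rfl
  exacts [d.fst.2 hs, d.snd.2 hs]

end

/-- In a nontrivial mixed 3-separation of a 3-connected graph,
the edges of the separator form a matching: no two of them share an endvertex. -/
theorem stmt2 (G : SimpleGraph V) (h3 : KConnected 3 G) (A B : Set V)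
    (hAB : MixedKSep G 3 A B) (hnt : NontrivialSep G A B) :
    ∀ e ∈ sepEdges G A B, ∀ f ∈ sepEdges G A B, e ≠ f →
      ∀ x : V, x ∈ e → x ∉ f := by
  intro e he f hf hef x hxe hxf
  obtain ⟨⟨hunion, -, -⟩, horder⟩ := hAB
  obtain ⟨S, hS, hmeets⟩ := exists_ncard_lt_of_meets_two_edges (Set.toFinite (sepSet G A B))
    (Or.inr ⟨e, he, rfl⟩) (Or.inr ⟨f, hf, rfl⟩) hef hxe hxf
  rw [← sepOrder, horder] at hS
  obtain ⟨a, ha, haS⟩ := Set.exists_mem_notMem_of_ncard_lt_ncard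
    (hS.trans_le (hnt.1.three_le_ncard A.toFinite))
  obtain ⟨b, hb, hbS⟩ := Set.exists_mem_notMem_of_ncard_lt_ncard
    (hS.trans_le (hnt.2.three_le_ncard B.toFinite))
  exact not_preconnected_of_meets_sepSet hunion hmeets ha haS hb hbS
    (h3.2 S (by omega)).preconnected

end Paper
end

section
/- Let (X1,X2) be a mixed 3-separation of a 3-connected graph G and let v be a vertex in X1∩X2. Then exactly one of the following holds: (1) v has at least two neighbours in both X1 and X2; (2) there is a unique index i ∈ {1,2} such that v has precisely one neighbour in X_i and at least two neighbours in X_{3−i}; moreover in case (2) the unique neighbour of v in X_i lies in X_i \ X_{3−i}, and v has two neighbours in X_{3−i} \ X_i. -/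
namespace Paper

open SimpleGraph

variable {V : Type*} [Fintype V] [DecidableEq V]

/-! A separator vertex `v` of a mixed `k`-separation of a `k`-connected graph has a neighbour in
each strict side. Hence if `v` has at most one neighbour in `X1`, that neighbour lies in `X1 \ X2`
and, as `v` has degree at least three, its remaining neighbours give two in `X2 \ X1`. -/

section

variable {W : Type*} {G : SimpleGraph W}

lemma not_connected_induce_compl_of_closed {S L : Set W} {x y : W} (hx : x ∈ L) (hxS : x ∉ S)
    (hy : y ∉ L) (hyS : y ∉ S) (hL : ∀ u ∈ L, ∀ w ∉ S, G.Adj u w → w ∈ L) :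
    ¬ (G.induce Sᶜ).Connected := fun hc => by
  obtain ⟨p⟩ := hc.preconnected ⟨x, hxS⟩ ⟨y, hyS⟩
  obtain ⟨d, -, hd₁, hd₂⟩ := p.exists_boundary_dart {z | z.val ∈ L} hx hy
  exact hd₂ (hL _ hd₁ _ d.snd.2 (by simpa using d.adj))

lemma KConnected.finite {k : ℕ} (hk : KConnected k G) : Finite W :=
  Nat.finite_of_card_ne_zero (Nat.ne_zero_of_lt hk.1)

lemma KConnected.le_ncard_neighborSet {k : ℕ} (hk : KConnected k G) (v : W) :
    k ≤ (G.neighborSet v).ncard := by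
  by_contra! hlt
  obtain ⟨w, hw⟩ : ((G.neighborSet v ∪ {v})ᶜ).Nonempty := by
    by_contra! hemp
    rw [Set.compl_empty_iff] at hemp
    have := Set.ncard_union_le (G.neighborSet v) {v}
    rw [hemp, Set.ncard_univ, Set.ncard_singleton] at this
    have := hk.1
    omega
  simp only [Set.mem_compl_iff, Set.mem_union, Set.mem_singleton_iff, not_or] at hw
  refine not_connected_induce_compl_of_closed (L := {v}) rfl G.notMem_neighborSet_self
    hw.2 hw.1 ?_ (hk.2 _ hlt)
  rintro u rfl w hw hadj
  exact absurd hadj hw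

variable {A B : Set W} {k : ℕ}

lemma sepEdges_comm : sepEdges G A B = sepEdges G B A := by
  ext e
  constructor <;> rintro ⟨he, x, hx, y, hy, rfl⟩ <;> exact ⟨he, y, hy, x, hx, Sym2.eq_swap⟩

lemma MixedKSep.symm (h : MixedKSep G k A B) : MixedKSep G k B A := by
  obtain ⟨⟨hu, hA, hB⟩, hord⟩ := h
  refine ⟨⟨by rwa [Set.union_comm], hB, hA⟩, ?_⟩
  rwa [sepOrder, sepSet, Set.inter_comm, ← sepEdges_comm]

lemma ncard_inter_add_ncard_sepEdges [Finite W] :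
    (A ∩ B).ncard + (sepEdges G A B).ncard = sepOrder G A B := by
  rw [sepOrder, sepSet, Set.ncard_union_eq, Set.ncard_image_of_injective _ Sum.inl_injective,
    Set.ncard_image_of_injective _ Sum.inr_injective]
  rw [Set.disjoint_left]
  rintro _ ⟨x, -, rfl⟩ ⟨e, -, he⟩
  cases he

/-- Each vertex of `B \ A` with a neighbour in `A \ B` is the end of its own separator edge. -/
lemma ncard_boundary_le_ncard_sepEdges [Finite W] :
    {y | y ∈ B \ A ∧ ∃ x ∈ A \ B, G.Adj x y}.ncard ≤ (sepEdges G A B).ncard := by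
  have hex : ∀ y ∈ {y | y ∈ B \ A ∧ ∃ x ∈ A \ B, G.Adj x y}, ∃ x ∈ A \ B, G.Adj x y :=
    fun y hy => hy.2
  choose! f hfA hfadj using hex
  refine Set.ncard_le_ncard_of_injOn (fun y => s(f y, y)) ?_ ?_
  · intro y hy
    exact ⟨G.mem_edgeSet.2 (hfadj y hy), f y, hfA y hy, y, hy.1, rfl⟩
  · intro y₁ hy₁ y₂ hy₂ heq
    rcases Sym2.eq_iff.1 heq with ⟨-, h⟩ | ⟨-, h⟩
    · exact h
    · exact absurd (h ▸ (hfA y₂ hy₂).1) hy₁.1.2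

/-- Otherwise `(A ∩ B) \ {v}` together with the ends in `B \ A` of the separator edges is a set
of fewer than `k` vertices cutting `A \ B` off from `v`. -/
lemma MixedKSep.exists_adj_mem_diff (hk : KConnected k G) (h : MixedKSep G k A B) {v : W}
    (hv : v ∈ A ∩ B) : ∃ u, G.Adj v u ∧ u ∈ A \ B := by
  by_contra! hno
  have := hk.finite
  set Y := {y | y ∈ B \ A ∧ ∃ x ∈ A \ B, G.Adj x y}
  have hS : ((A ∩ B) \ {v} ∪ Y).ncard < k := by
    have hunion := Set.ncard_union_le ((A ∩ B) \ {v}) Y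
    have hY : Y.ncard ≤ (sepEdges G A B).ncard := ncard_boundary_le_ncard_sepEdges
    have hpos : 0 < (A ∩ B).ncard := (Set.ncard_pos (Set.toFinite _)).2 ⟨v, hv⟩
    rw [Set.ncard_sdiff_singleton_of_mem hv] at hunion
    rw [← h.2, ← ncard_inter_add_ncard_sepEdges]
    omega
  obtain ⟨x, hx⟩ := h.1.2.1
  refine not_connected_induce_compl_of_closed (L := A \ B) hx ?_ (fun hv' => hv'.2 hv.2) ?_ ?_
    (hk.2 _ hS)
  · rintro (⟨hxAB, -⟩ | hxY)
    · exact hx.2 hxAB.2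
    · exact hxY.1.2 hx.1
  · rintro (⟨-, hvv⟩ | hvY)
    · exact hvv rfl
    · exact hvY.1.2 hv.1
  · intro u hu w hwS hadj
    have hwAB : w ∈ A ∪ B := h.1.1 ▸ Set.mem_univ w
    by_cases hwA : w ∈ A
    · by_cases hwB : w ∈ B
      · obtain rfl : w = v := by_contra fun hne => hwS (Or.inl ⟨⟨hwA, hwB⟩, hne⟩)
        exact absurd hu (hno u hadj.symm)
      · exact ⟨hwA, hwB⟩
    · exact absurd (Or.inr ⟨⟨hwAB.resolve_left hwA, hwA⟩, u, hu, hadj⟩) hwS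

lemma ncard_neighborSet_inter_diff_of_eq_singleton (hAB : A ∪ B = Set.univ) {v u : W}
    (hu : G.neighborSet v ∩ A = {u}) :
    (G.neighborSet v ∩ (B \ A)).ncard = (G.neighborSet v).ncard - 1 := by
  have hset : G.neighborSet v ∩ (B \ A) = G.neighborSet v \ {u} := by
    ext w
    have : w ∈ A ∪ B := hAB ▸ Set.mem_univ w
    rw [← hu]
    simp only [Set.mem_inter_iff, Set.mem_sdiff, Set.mem_union] at this ⊢
    tauto
  rw [hset, Set.ncard_sdiff_singleton_of_mem ((Set.eq_singleton_iff_unique_mem.1 hu).1.1)]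

lemma MixedKSep.neighbors_of_ncard_le_one (h3 : KConnected 3 G) (h : MixedKSep G 3 A B) {v : W}
    (hv : v ∈ A ∩ B) (hle : (G.neighborSet v ∩ A).ncard ≤ 1) :
    (G.neighborSet v ∩ A).ncard = 1 ∧ G.neighborSet v ∩ A ⊆ A \ B ∧
      2 ≤ (G.neighborSet v ∩ (B \ A)).ncard := by
  have := h3.finite
  obtain ⟨u, hadj, huA⟩ := h.exists_adj_mem_diff h3 hv
  have hu : G.neighborSet v ∩ A = {u} :=
    Set.eq_singleton_iff_unique_mem.2 ⟨⟨hadj, huA.1⟩,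
      fun w hw => (Set.ncard_le_one_iff (Set.toFinite _)).1 hle hw ⟨hadj, huA.1⟩⟩
  have hdeg := h3.le_ncard_neighborSet v
  refine ⟨by rw [hu, Set.ncard_singleton], by rwa [hu, Set.singleton_subset_iff], ?_⟩
  rw [ncard_neighborSet_inter_diff_of_eq_singleton h.1.1 hu]
  omega

end

/-- For a vertex `v` in the separator of a mixed 3-separation
`(X1,X2)` of a 3-connected graph, exactly one of the two alternatives holds. -/
theorem stmt3 (G : SimpleGraph V) (h3 : KConnected 3 G) (X1 X2 : Set V)
    (h : MixedKSep G 3 X1 X2) (v : V) (hv : v ∈ X1 ∩ X2) :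
    Xor'
      (2 ≤ (G.neighborSet v ∩ X1).ncard ∧ 2 ≤ (G.neighborSet v ∩ X2).ncard)
      (((G.neighborSet v ∩ X1).ncard = 1 ∧ G.neighborSet v ∩ X1 ⊆ X1 \ X2 ∧
          2 ≤ (G.neighborSet v ∩ (X2 \ X1)).ncard) ∨
        ((G.neighborSet v ∩ X2).ncard = 1 ∧ G.neighborSet v ∩ X2 ⊆ X2 \ X1 ∧
          2 ≤ (G.neighborSet v ∩ (X1 \ X2)).ncard)) := by
  by_cases h1 : (G.neighborSet v ∩ X1).ncard ≤ 1
  · have hcase := h.neighbors_of_ncard_le_one h3 hv h1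
    exact Or.inr ⟨Or.inl hcase, fun hboth => by omega⟩
  by_cases h2 : (G.neighborSet v ∩ X2).ncard ≤ 1
  · have hcase := h.symm.neighbors_of_ncard_le_one h3 ⟨hv.2, hv.1⟩ h2
    exact Or.inr ⟨Or.inr hcase, fun hboth => by omega⟩
  refine Or.inl ⟨⟨by omega, by omega⟩, ?_⟩
  rintro (⟨hone, -⟩ | ⟨hone, -⟩) <;> omega

end Paper
end

section
/- Let (A,B) and (C,D) be crossing mixed 3-separations of a graph G such that G[A\B] or G[B\A] is connected. Then the centre of the crossing diagram cannot have size three. -/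
/-!
The centre lies in both separators, so if it has three elements it equals both of them. Then
`A ∩ B = C ∩ D` and every edge between `C \ D` and `D \ C` is diagonal, hence has an end in
`B \ A`. So `(C, D)` splits `A \ B` with no edge of `G[A \ B]` across, and connectedness of
`G[A \ B]` puts `A \ B` on one side of `(C, D)`, which makes the two separations nested.
-/

namespace Paper

open SimpleGraph

variable {V : Type*} [Fintype V] [DecidableEq V]

open Set

section

omit [Fintype V] [DecidableEq V]

lemma subset_or_disjoint_of_induce_connected {W : Type*} {G : SimpleGraph W} {S T : Set W}
    (hS : (G.induce S).Connected) (hST : ∀ x ∈ S ∩ T, ∀ y ∈ S \ T, ¬ G.Adj x y) :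
    S ⊆ T ∨ Disjoint S T := by
  rw [or_iff_not_imp_right, not_disjoint_iff]
  rintro ⟨x, hxS, hxT⟩ y hyS
  by_contra hyT
  obtain ⟨p⟩ := hS.preconnected ⟨x, hxS⟩ ⟨y, hyS⟩
  obtain ⟨d, -, hd₁, hd₂⟩ := p.exists_boundary_dart {v : S | (v : W) ∈ T} hxT hyT
  exact hST _ ⟨d.fst.2, hd₁⟩ _ ⟨d.snd.2, hd₂⟩ d.adj

variable {G : SimpleGraph V} {A B C D : Set V}

lemma Nested.of_swap_left (h : Nested B A C D) : Nested A B C D := by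
  unfold Nested at *
  tauto

lemma diagEdges_comm : diagEdges G C D A B = diagEdges G A B C D := by
  have key : ∀ {A B C D : Set V}, diagEdges G C D A B ⊆ diagEdges G A B C D := by
    rintro A B C D _ ⟨he, x, y, rfl, ⟨hx, hy⟩ | ⟨hx, hy⟩⟩
    · exact ⟨he, x, y, rfl, Or.inl ⟨⟨hx.2, hx.1⟩, hy.2, hy.1⟩⟩
    · exact ⟨he, y, x, Sym2.eq_swap, Or.inr ⟨⟨hy.2, hy.1⟩, hx.2, hx.1⟩⟩
  exact key.antisymm key

lemma diagEdges_swap_left : diagEdges G B A C D = diagEdges G A B C D := by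
  have key : ∀ {A B : Set V}, diagEdges G B A C D ⊆ diagEdges G A B C D := by
    rintro A B _ ⟨he, x, y, rfl, ⟨hx, hy⟩ | ⟨hx, hy⟩⟩
    · exact ⟨he, y, x, Sym2.eq_swap, Or.inr ⟨hy, hx⟩⟩
    · exact ⟨he, y, x, Sym2.eq_swap, Or.inl ⟨hy, hx⟩⟩
  exact key.antisymm key

lemma centre_comm : centre G C D A B = centre G A B C D := by
  rw [centre, centre, diagEdges_comm, inter_comm (C ∩ D), inter_right_comm, ← inter_assoc]

lemma centre_subset_sepSet : centre G A B C D ⊆ sepSet G A B := by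
  rintro _ (⟨v, hv, rfl⟩ | ⟨e, ⟨he, x, y, rfl, hxy⟩, rfl⟩)
  · exact Or.inl ⟨v, hv.1.1, rfl⟩
  · refine Or.inr ⟨_, ⟨he, ?_⟩, rfl⟩
    rcases hxy with ⟨hx, hy⟩ | ⟨hx, hy⟩
    exacts [⟨x, hx.1, y, hy.1, rfl⟩, ⟨x, hx.1, y, hy.1, rfl⟩]

lemma sepSet_subset_centre_of_sepOrder_le [Finite V]
    (h : sepOrder G A B ≤ (centre G A B C D).ncard) :
    sepSet G A B ⊆ centre G A B C D :=
  (eq_of_subset_of_ncard_le centre_subset_sepSet h (toFinite _)).ge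

lemma inter_subset_of_sepSet_subset_centre (h : sepSet G A B ⊆ centre G A B C D) :
    A ∩ B ⊆ C ∩ D := by
  intro v hv
  obtain ⟨w, hw, hwv⟩ | ⟨e, -, he⟩ := h (Or.inl ⟨v, hv, rfl⟩ : Sum.inl v ∈ sepSet G A B)
  · rw [Sum.inl_injective hwv] at hw
    exact ⟨hw.1.2, hw.2⟩
  · exact (Sum.inr_ne_inl he).elim

lemma sepEdges_subset_of_sepSet_subset_centre (h : sepSet G A B ⊆ centre G A B C D) :
    sepEdges G A B ⊆ diagEdges G A B C D := by
  intro e he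
  obtain ⟨v, -, hv⟩ | ⟨f, hf, hfe⟩ := h (Or.inr ⟨e, he, rfl⟩ : Sum.inr e ∈ sepSet G A B)
  · exact (Sum.inl_ne_inr hv).elim
  · rwa [← Sum.inr_injective hfe]

lemma notMem_diagEdges_of_mem_diff {x y : V} (hx : x ∈ A \ B) (hy : y ∈ A \ B) :
    s(x, y) ∉ diagEdges G A B C D := by
  rintro ⟨-, u, w, huw, ⟨-, hw⟩ | ⟨-, hw⟩⟩ <;>
  · have hw' : w ∈ s(x, y) := huw ▸ Sym2.mem_mk_right u w
    rcases Sym2.mem_iff.1 hw' with rfl | rfl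
    exacts [hw.1.2 hx.1, hw.1.2 hy.1]

lemma subset_and_subset_of_diff_subset (hAB : A ∪ B = univ) (hinter : A ∩ B = C ∩ D)
    (h : A \ B ⊆ C) : A ⊆ C ∧ D ⊆ B := by
  refine ⟨sdiff_union_inter A B ▸ union_subset h (hinter ▸ inter_subset_left), fun x hxD => ?_⟩
  by_contra hxB
  have hxA : x ∈ A := (hAB ▸ mem_univ x : x ∈ A ∪ B).resolve_right hxB
  exact hxB (hinter.ge ⟨h ⟨hxA, hxB⟩, hxD⟩).2

lemma nested_of_induce_diff_connected (hAB : A ∪ B = univ) (hCD : C ∪ D = univ)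
    (hinter : A ∩ B = C ∩ D) (hdiag : sepEdges G C D ⊆ diagEdges G A B C D)
    (hconn : (G.induce (A \ B)).Connected) : Nested A B C D := by
  have hD : ∀ x, x ∉ C → x ∈ D := fun x => (hCD ▸ mem_univ x : x ∈ C ∪ D).resolve_left
  have hnotD : ∀ x ∈ A \ B, x ∈ C → x ∉ D := fun x hx hxC hxD =>
    hx.2 (hinter.ge ⟨hxC, hxD⟩).2
  have hnoadj : ∀ x ∈ (A \ B) ∩ C, ∀ y ∈ (A \ B) \ C, ¬ G.Adj x y :=
    fun x ⟨hx, hxC⟩ y ⟨hy, hyC⟩ hxy => notMem_diagEdges_of_mem_diff hx hy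
      (hdiag ⟨hxy, x, ⟨hxC, hnotD x hx hxC⟩, y, ⟨hD y hyC, hyC⟩, rfl⟩)
  rcases subset_or_disjoint_of_induce_connected hconn hnoadj with hC | hC
  · exact Or.inl (subset_and_subset_of_diff_subset hAB hinter hC)
  · exact Or.inr (Or.inl (subset_and_subset_of_diff_subset hAB (hinter.trans (inter_comm C D))
      fun x hx => hD x (disjoint_left.1 hC hx)))

end

/-- If two mixed 3-separations cross and `(A,B)` is half-connected,
then the centre cannot have size three. -/
theorem stmt8 (G : SimpleGraph V) (A B C D : Set V)
    (hAB : MixedKSep G 3 A B) (hCD : MixedKSep G 3 C D)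
    (hcross : ¬ Nested A B C D)
    (hhalf : (G.induce (A \ B)).Connected ∨ (G.induce (B \ A)).Connected) :
    (centre G A B C D).ncard ≠ 3 := by
  intro h3
  have hABc : sepSet G A B ⊆ centre G A B C D :=
    sepSet_subset_centre_of_sepOrder_le (by rw [hAB.2, h3])
  have hCDc : sepSet G C D ⊆ centre G C D A B :=
    sepSet_subset_centre_of_sepOrder_le (by rw [hCD.2, centre_comm, h3])
  have hinter : A ∩ B = C ∩ D :=
    (inter_subset_of_sepSet_subset_centre hABc).antisymm
      (inter_subset_of_sepSet_subset_centre hCDc)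
  have hdiag : sepEdges G C D ⊆ diagEdges G A B C D :=
    diagEdges_comm (G := G) ▸ sepEdges_subset_of_sepSet_subset_centre hCDc
  apply hcross
  rcases hhalf with hconn | hconn
  · exact nested_of_induce_diff_connected hAB.1.1 hCD.1.1 hinter hdiag hconn
  · exact (nested_of_induce_diff_connected (union_comm A B ▸ hAB.1.1) hCD.1.1
      (inter_comm A B ▸ hinter) (diagEdges_swap_left (G := G) ▸ hdiag) hconn).of_swap_left

end Paper
end

section
/- Let G be a 3-connected graph. If a mixed 3-separation (A,B) of G is not strong (i.e. some vertex in A∩B has degree exactly three in G), then (A,B) is crossed by a trivial tri-separation of G, namely the tri-separation ({v}, V(G)\{v}) for a degree-3 vertex v in A∩B. -/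
namespace Paper

open SimpleGraph

variable {V : Type*} [Fintype V] [DecidableEq V]

/-!
The separator of `({v}, V \ {v})` has no vertices and consists of the edges at `v`, so at a
degree-3 vertex it is a tri-separation. It cannot be nested with `(A, B)` when `v ∈ A ∩ B`:
`{v}ᶜ` contains neither `A` nor `B`, and `{v}` contains neither side since `A \ B` and `B \ A`
are nonempty.
-/

omit [Fintype V] [DecidableEq V] in
theorem sepEdges_singleton_compl (G : SimpleGraph V) (v : V) :
    sepEdges G {v} {v}ᶜ = (fun y => s(v, y)) '' G.neighborSet v := by
  ext e
  constructor
  · rintro ⟨he, x, ⟨rfl : x = v, -⟩, y, -, rfl⟩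
    exact ⟨y, he, rfl⟩
  · rintro ⟨y, hy, rfl⟩
    have hyv : y ≠ v := (G.ne_of_adj hy).symm
    exact ⟨hy, v, by simp, y, by simp [hyv], rfl⟩

omit [Fintype V] [DecidableEq V] in
theorem sepOrder_singleton_compl (G : SimpleGraph V) (v : V) :
    sepOrder G {v} {v}ᶜ = (G.neighborSet v).ncard := by
  have hsep : sepSet G {v} {v}ᶜ = Sum.inr '' sepEdges G {v} {v}ᶜ := by
    simp [sepSet]
  have hinj : Set.InjOn (fun y => s(v, y)) (G.neighborSet v) :=
    fun _ _ _ _ h => Sym2.congr_right.mp h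
  rw [sepOrder, hsep, Set.ncard_image_of_injective _ Sum.inr_injective,
    sepEdges_singleton_compl, hinj.ncard_image]

omit [Fintype V] [DecidableEq V] in
theorem triSep_singleton_compl {G : SimpleGraph V} {v w : V} (hwv : w ≠ v)
    (hdeg : (G.neighborSet v).ncard = 3) : TriSep G {v} {v}ᶜ := by
  refine ⟨⟨⟨by simp, by simp, ⟨w, by simp [hwv]⟩⟩, ?_⟩, by simp⟩
  rw [sepOrder_singleton_compl, hdeg]

omit [Fintype V] [DecidableEq V] in
theorem not_nested_singleton_compl {A B : Set V} {v : V} (hA : (A \ B).Nonempty)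
    (hB : (B \ A).Nonempty) (hv : v ∈ A ∩ B) : ¬ Nested ({v} : Set V) {v}ᶜ A B := by
  obtain ⟨a, haA, haB⟩ := hA
  obtain ⟨b, hbB, hbA⟩ := hB
  rintro (⟨-, hBv⟩ | ⟨-, hAv⟩ | ⟨-, hBv⟩ | ⟨-, hAv⟩)
  · exact hBv hv.2 rfl
  · exact hAv hv.1 rfl
  · exact hbA ((hBv hbB : b = v) ▸ hv.1)
  · exact haB ((hAv haA : a = v) ▸ hv.2)

theorem stmt9_general (G : SimpleGraph V) (A B : Set V)
    (hAB : MixedKSep G 3 A B) (v : V) (hv : v ∈ A ∩ B)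
    (hdeg : (G.neighborSet v).ncard = 3) :
    TriSep G {v} {v}ᶜ ∧ TrivialSep G {v} {v}ᶜ ∧
      ¬ Nested ({v} : Set V) {v}ᶜ A B := by
  obtain ⟨⟨-, hA, hB⟩, -⟩ := hAB
  obtain ⟨w, hwB, hwA⟩ := hB
  have hwv : w ≠ v := fun h => hwA (h ▸ hv.1)
  exact ⟨triSep_singleton_compl hwv hdeg, ⟨v, hdeg, .inl ⟨rfl, rfl⟩⟩,
    not_nested_singleton_compl hA ⟨w, hwB, hwA⟩ hv⟩

/-- A mixed 3-separation of a 3-connected graph that is not strong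
is crossed by the trivial tri-separation at a degree-3 vertex of its separator. -/
theorem stmt9 (G : SimpleGraph V) (h3 : KConnected 3 G) (A B : Set V)
    (hAB : MixedKSep G 3 A B) (v : V) (hv : v ∈ A ∩ B)
    (hdeg : (G.neighborSet v).ncard = 3) :
    TriSep G {v} {v}ᶜ ∧ TrivialSep G {v} {v}ᶜ ∧
      ¬ Nested ({v} : Set V) {v}ᶜ A B :=
  stmt9_general G A B hAB v hv hdeg

end Paper
end
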